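/- arXiv:1512.06577 — 4 statements merged into one kernel-verified Lean document; each statement's English description precedes it below -/
import Mathlib

section
/- Let $f : (0,\infty) \to (0,\infty)$ be nondecreasing and locally absolutely continuous, and let $M > 0$ be such that $\rho f'(\rho) \le M f(\rho)$ for almost every $\rho > 0$. Then for all $0 < r < R$, $f(R) - f(r) \le \max\{1, M\}\,(1 - r/R)\, f(R)$. -/
open MeasureTheory Set

theorem stmt_2 (f : ℝ → ℝ) (M : ℝ) (hM : 0 < M)
    (hpos : ∀ ρ > (0:ℝ), 0 < f ρ)
    (hmono : MonotoneOn f (Set.Ioi (0:ℝ)))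
    (hderiv : ∀ᵐ ρ : ℝ, 0 < ρ → DifferentiableAt ℝ f ρ)
    (hftc : ∀ a b : ℝ, 0 < a → a ≤ b → f b - f a = ∫ x in a..b, deriv f x)
    (hint : ∀ a b : ℝ, 0 < a → a ≤ b → IntervalIntegrable (deriv f) volume a b)
    (hbound : ∀ᵐ ρ : ℝ, 0 < ρ → ρ * deriv f ρ ≤ M * f ρ) :
    ∀ r R : ℝ, 0 < r → r < R → f R - f r ≤ max 1 M * (1 - r / R) * f R := by
  have key : ∀ a b : ℝ, 0 < a → a ≤ b →
      f b * (1 - M * (Real.log b - Real.log a)) ≤ f a := by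
    intro a b ha hab
    have hb : 0 < b := lt_of_lt_of_le ha hab
    have h1 : f b - f a ≤ M * f b * (Real.log b - Real.log a) := by
      rw [hftc a b ha hab]
      have hint' := hint a b ha hab
      have hg : IntervalIntegrable (fun ρ => M * f b * ρ⁻¹) volume a b := by
        apply ContinuousOn.intervalIntegrable
        apply ContinuousOn.mul continuousOn_const
        apply ContinuousOn.inv₀ continuousOn_id
        intro x hx
        rw [Set.uIcc_of_le hab] at hx
        exact ne_of_gt (lt_of_lt_of_le ha hx.1)
      have hle : ∀ᵐ ρ ∂(volume.restrict (Set.Icc a b)),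
          deriv f ρ ≤ M * f b * ρ⁻¹ := by
        have h2 : ∀ᵐ ρ ∂(volume.restrict (Set.Icc a b)), 0 < ρ → ρ * deriv f ρ ≤ M * f ρ :=
          ae_restrict_of_ae hbound
        filter_upwards [h2, ae_restrict_mem measurableSet_Icc] with ρ h hρmem
        have hρ : 0 < ρ := lt_of_lt_of_le ha hρmem.1
        have h3 := h hρ
        have h4 : f ρ ≤ f b := hmono (Set.mem_Ioi.mpr hρ) (Set.mem_Ioi.mpr hb) hρmem.2
        rw [show M * f b * ρ⁻¹ = M * f b / ρ by ring, le_div_iff₀ hρ]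
        nlinarith
      have h5 := intervalIntegral.integral_mono_ae_restrict hab hint' hg hle
      have h6 : ∫ ρ in a..b, M * f b * ρ⁻¹ = M * f b * (Real.log b - Real.log a) := by
        have h0 : (0:ℝ) ∉ Set.uIcc a b := by
          rw [Set.uIcc_of_le hab]
          intro hmem
          exact absurd hmem.1 (not_le.mpr ha)
        rw [intervalIntegral.integral_const_mul, integral_inv h0,
          Real.log_div hb.ne' ha.ne']
      calc ∫ x in a..b, deriv f x ≤ ∫ ρ in a..b, M * f b * ρ⁻¹ := h5
        _ = M * f b * (Real.log b - Real.log a) := h6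
    nlinarith
  intro r R hr hrR
  have hR : 0 < R := lt_trans hr hrR
  set L := Real.log R - Real.log r with hLdef
  have hLpos : 0 < L := sub_pos.mpr (Real.log_lt_log hr hrR)
  -- main Gronwall step
  have main : ∀ n : ℕ, 0 < n → M * L / n ≤ 1 → f R * (1 - M * L / n) ^ n ≤ f r := by
    intro n hn hn1
    have hnR : (0:ℝ) < n := Nat.cast_pos.mpr hn
    have hc : 0 ≤ 1 - M * L / n := by linarith
    have claim : ∀ k : ℕ, k ≤ n →
        f R * (1 - M * L / n) ^ k ≤ f (R * Real.exp (-((k : ℝ) * L / n))) := by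
      intro k hk
      induction k with
      | zero => simp
      | succ k ih =>
        have ihk := ih (Nat.le_of_succ_le hk)
        have ha : 0 < R * Real.exp (-(((k : ℝ) + 1) * L / n)) :=
          mul_pos hR (Real.exp_pos _)
        have hab : R * Real.exp (-(((k : ℝ) + 1) * L / n)) ≤ R * Real.exp (-((k : ℝ) * L / n)) := by
          apply mul_le_mul_of_nonneg_left _ hR.le
          apply Real.exp_le_exp.mpr
          have : 0 ≤ L / n := le_of_lt (div_pos hLpos hnR)
          have hkk : (k : ℝ) * L / n ≤ ((k : ℝ) + 1) * L / n := by
            gcongr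
            linarith
          linarith
        have step := key _ _ ha hab
        have hlog : Real.log (R * Real.exp (-((k : ℝ) * L / n))) -
            Real.log (R * Real.exp (-(((k : ℝ) + 1) * L / n))) = L / n := by
          rw [Real.log_mul hR.ne' (Real.exp_ne_zero _),
            Real.log_mul hR.ne' (Real.exp_ne_zero _), Real.log_exp, Real.log_exp]
          field_simp
          ring
        rw [hlog] at step
        have hMLn : M * (L / n) = M * L / n := by ring
        rw [hMLn] at step
        have h7 : f R * (1 - M * L / n) ^ (k + 1) =
            (f R * (1 - M * L / n) ^ k) * (1 - M * L / n) := by ring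
        rw [h7]
        calc (f R * (1 - M * L / n) ^ k) * (1 - M * L / n)
            ≤ f (R * Real.exp (-((k : ℝ) * L / n))) * (1 - M * L / n) :=
              mul_le_mul_of_nonneg_right ihk hc
          _ ≤ f (R * Real.exp (-(((k : ℝ) + 1) * L / n))) := step
          _ = f (R * Real.exp (-((((k:ℕ) + 1 : ℕ) : ℝ) * L / n))) := by push_cast; ring_nf
    have hcn := claim n le_rfl
    have hnn : -((n : ℝ) * L / n) = -L := by
      field_simp
    rw [hnn] at hcn
    have hRr : R * Real.exp (-L) = r := by
      rw [hLdef]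
      rw [neg_sub, Real.exp_sub, Real.exp_log hr, Real.exp_log hR]
      field_simp
    rwa [hRr] at hcn
  -- take the limit n → ∞
  have hlim : Filter.Tendsto (fun n : ℕ => f R * (1 + (-(M * L)) / n) ^ n)
      Filter.atTop (nhds (f R * Real.exp (-(M * L)))) :=
    (Real.tendsto_one_add_div_pow_exp (-(M * L))).const_mul _
  have hfinal : f R * Real.exp (-(M * L)) ≤ f r := by
    apply le_of_tendsto hlim
    obtain ⟨N, hN⟩ := exists_nat_gt (M * L)
    filter_upwards [Filter.eventually_ge_atTop (max N 1)] with n hn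
    have hn1 : 1 ≤ n := le_trans (le_max_right N 1) hn
    have hnN : N ≤ n := le_trans (le_max_left N 1) hn
    have hnR : (0:ℝ) < n := by exact_mod_cast hn1
    have hMLn : M * L / n ≤ 1 := by
      rw [div_le_one hnR]
      have hNn : (N:ℝ) ≤ n := by exact_mod_cast hnN
      linarith
    have heq : (1 + (-(M * L)) / (n : ℝ)) = 1 - M * L / n := by ring
    rw [heq]
    exact main n hn1 hMLn
  -- convert exp to rpow
  have hs0 : 0 < r / R := div_pos hr hR
  have hs1 : r / R < 1 := (div_lt_one hR).mpr hrR
  have hpow : Real.exp (-(M * L)) = (r / R) ^ M := by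
    rw [Real.rpow_def_of_pos hs0, Real.log_div hr.ne' hR.ne', hLdef]
    ring_nf
  rw [hpow] at hfinal
  have hfR : 0 < f R := hpos R hR
  -- elementary inequality
  have hel : 1 - (r / R) ^ M ≤ max 1 M * (1 - r / R) := by
    rcases le_total M 1 with hM1 | hM1
    · have h8 : r / R ≤ (r / R) ^ M := by
        calc r / R = (r / R) ^ (1 : ℝ) := (Real.rpow_one _).symm
          _ ≤ (r / R) ^ M := Real.rpow_le_rpow_of_exponent_ge hs0 hs1.le hM1
      have h9 : (1:ℝ) ≤ max 1 M := le_max_left 1 M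
      nlinarith
    · rw [max_eq_right hM1]
      have hbern := one_add_mul_self_le_rpow_one_add
        (show (-1:ℝ) ≤ r / R - 1 by linarith) hM1
      have h10 : (1 : ℝ) + (r / R - 1) = r / R := by ring
      rw [h10] at hbern
      linarith
  calc f R - f r ≤ f R - f R * (r / R) ^ M := by linarith
    _ = f R * (1 - (r / R) ^ M) := by ring
    _ ≤ f R * (max 1 M * (1 - r / R)) := mul_le_mul_of_nonneg_left hel hfR.le
    _ = max 1 M * (1 - r / R) * f R := by ring
end

section
/- Let $\mu$ be a Borel measure on a metric space $X$, let $x_0 \in X$ with $\mu(\{x_0\}) = 0$ and $0 < \mu(B(x_0,\rho)) < \infty$ for all $\rho > 0$. Suppose there exist $\eta > 0$, $C > 0$ and $R_0 > 0$ such that $\mu(B(x_0,R) \setminus B(x_0,r)) \le C (1 - r/R)^\eta \mu(B(x_0,R))$ for all $0 < r < R < R_0$. Then $\eta \le 1$. -/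
/-! If `η > 1`, cutting the annulus `B(x₀, b) \ B(x₀, a)` into `n` annuli of width `(b - a) / n`
bounds its measure by `C ((b - a) / a) ^ η μ(B(x₀, b)) n ^ (1 - η)`, which tends to `0`. Hence
`ρ ↦ μ(B(x₀, ρ))` is constant on `(0, R₀)`, yet it tends to `μ {x₀} = 0` as `ρ → 0⁺`,
contradicting `μ(B(x₀, ρ)) > 0`. -/

open MeasureTheory Metric Filter Set Topology

theorem sub_le_mul_rpow_mul_natCast_rpow {f : ℝ → ℝ} {a b K η : ℝ} (hab : a ≤ b)
    (hf : ∀ x y, a ≤ x → x ≤ y → y ≤ b → f y - f x ≤ K * (y - x) ^ η) {n : ℕ} (hn : 0 < n) :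
    f b - f a ≤ K * (b - a) ^ η * (n : ℝ) ^ (1 - η) := by
  have hn' : (0 : ℝ) < n := Nat.cast_pos.mpr hn
  set h := (b - a) / n
  have hh : 0 ≤ h := div_nonneg (sub_nonneg.mpr hab) hn'.le
  set t : ℕ → ℝ := fun i => a + i * h
  have ht_le : ∀ i ≤ n, t i ≤ b := fun i hi => by
    have : (i : ℝ) * h ≤ n * h := by gcongr
    simp only [t]; rw [mul_div_cancel₀ _ hn'.ne'] at this; linarith
  have hstep : ∀ i < n, f (t (i + 1)) - f (t i) ≤ K * h ^ η := fun i hi => by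
    have := hf (t i) (t (i + 1)) (le_add_of_nonneg_right (by positivity))
      (by simp only [t]; push_cast; linarith) (ht_le _ hi)
    simpa only [t, Nat.cast_succ, add_sub_add_left_eq_sub, ← sub_mul, add_sub_cancel_left,
      one_mul] using this
  calc f b - f a = ∑ i ∈ Finset.range n, (f (t (i + 1)) - f (t i)) := by
        rw [Finset.sum_range_sub (fun i => f (t i))]
        simp only [t, Nat.cast_zero, zero_mul, add_zero, h, mul_div_cancel₀ _ hn'.ne',
          add_sub_cancel]
    _ ≤ n * (K * h ^ η) := by
        simpa using Finset.sum_le_sum fun i hi => hstep i (Finset.mem_range.mp hi)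
    _ = K * (b - a) ^ η * (n : ℝ) ^ (1 - η) := by
        rw [Real.div_rpow (sub_nonneg.mpr hab) hn'.le, Real.rpow_sub hn', Real.rpow_one]
        ring

theorem le_of_forall_sub_le_mul_rpow {f : ℝ → ℝ} {a b K η : ℝ} (hη : 1 < η) (hab : a ≤ b)
    (hf : ∀ x y, a ≤ x → x ≤ y → y ≤ b → f y - f x ≤ K * (y - x) ^ η) : f b ≤ f a := by
  have hlim : Tendsto (fun n : ℕ => K * (b - a) ^ η * (n : ℝ) ^ (1 - η)) atTop (𝓝 0) := by
    have := (tendsto_rpow_neg_atTop (sub_pos.mpr hη)).comp tendsto_natCast_atTop_atTop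
    simpa using this.const_mul (K * (b - a) ^ η)
  have : f b - f a ≤ 0 := ge_of_tendsto hlim <| (eventually_gt_atTop 0).mono fun n hn =>
    sub_le_mul_rpow_mul_natCast_rpow hab hf hn
  linarith

section AnnularDecay

variable {X : Type*} [MetricSpace X] [MeasurableSpace X] [OpensMeasurableSpace X]
  {μ : Measure X} {x₀ : X} {η C R₀ : ℝ}

def AnnularDecayAt (μ : Measure X) (x₀ : X) (η C R₀ : ℝ) : Prop :=
  ∀ r R : ℝ, 0 < r → r < R → R < R₀ →
    μ (ball x₀ R \ ball x₀ r) ≤ ENNReal.ofReal (C * (1 - r / R) ^ η) * μ (ball x₀ R)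

theorem AnnularDecayAt.measureReal_ball_sub_le (h : AnnularDecayAt μ x₀ η C R₀) (hC : 0 ≤ C)
    {r R : ℝ} (hr : 0 < r) (hrR : r < R) (hR : R < R₀) (hfin : μ (ball x₀ R) ≠ ⊤) :
    μ.real (ball x₀ R) - μ.real (ball x₀ r) ≤ C * ((R - r) / R) ^ η * μ.real (ball x₀ R) := by
  have hRr : 0 ≤ (R - r) / R := div_nonneg (sub_nonneg.mpr hrR.le) (hr.trans hrR).le
  have := ENNReal.toReal_mono (ENNReal.mul_ne_top ENNReal.ofReal_ne_top hfin) (h r R hr hrR hR)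
  rwa [ENNReal.toReal_mul, one_sub_div (hr.trans hrR).ne',
    ENNReal.toReal_ofReal (mul_nonneg hC (Real.rpow_nonneg hRr η)), ← measureReal_def,
    ← measureReal_def, measureReal_sdiff (ball_subset_ball hrR.le) measurableSet_ball hfin] at this

theorem AnnularDecayAt.measure_ball_le (h : AnnularDecayAt μ x₀ η C R₀) (hC : 0 ≤ C)
    (hη : 1 < η) {a b : ℝ} (ha : 0 < a) (hab : a ≤ b) (hb : b < R₀)
    (hfin : μ (ball x₀ b) ≠ ⊤) : μ (ball x₀ b) ≤ μ (ball x₀ a) := by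
  have hfin' : ∀ {ρ}, ρ ≤ b → μ (ball x₀ ρ) ≠ ⊤ := fun hρ =>
    measure_ne_top_of_subset (ball_subset_ball hρ) hfin
  refine (ENNReal.toReal_le_toReal hfin (hfin' hab)).mp <|
    le_of_forall_sub_le_mul_rpow (f := fun ρ => μ.real (ball x₀ ρ))
      (K := C * μ.real (ball x₀ b) / a ^ η) hη hab ?_
  intro r R har hrR hRb
  rcases hrR.eq_or_lt with rfl | hrR
  · simp only [sub_self, Real.zero_rpow (zero_lt_one.trans hη).ne', mul_zero, le_refl]
  calc μ.real (ball x₀ R) - μ.real (ball x₀ r)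
      ≤ C * ((R - r) / R) ^ η * μ.real (ball x₀ R) :=
        h.measureReal_ball_sub_le hC (ha.trans_le har) hrR (hRb.trans_lt hb) (hfin' hRb)
    _ ≤ C * ((R - r) / a) ^ η * μ.real (ball x₀ b) := by
        gcongr
        · exact div_nonneg (sub_nonneg.mpr hrR.le) (ha.le.trans (har.trans hrR.le))
        · exact har.trans hrR.le
    _ = C * μ.real (ball x₀ b) / a ^ η * (R - r) ^ η := by
        rw [Real.div_rpow (sub_nonneg.mpr hrR.le) ha.le]
        ring

end AnnularDecay

theorem stmt_3_general {X : Type*} [MetricSpace X] [MeasurableSpace X] [BorelSpace X] (μ : Measure X) (x₀ : X)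
    (hatom : μ {x₀} = 0)
    (hball : ∀ ρ : ℝ, 0 < ρ → 0 < μ (ball x₀ ρ) ∧ μ (ball x₀ ρ) < ⊤)
    (η C R₀ : ℝ) (hC : 0 < C) (hR₀ : 0 < R₀)
    (hAD : ∀ r R : ℝ, 0 < r → r < R → R < R₀ →
      μ (ball x₀ R \ ball x₀ r) ≤ ENNReal.ofReal (C * (1 - r / R) ^ η) * μ (ball x₀ R)) :
    η ≤ 1 := by
  by_contra! hη1
  set b := R₀ / 2
  have hb : 0 < b := half_pos hR₀
  have hfin : μ (ball x₀ b) ≠ ⊤ := (hball b hb).2.ne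
  have hlim : Tendsto (fun r => μ (ball x₀ r)) (𝓝[>] 0) (𝓝 0) := by
    rw [← hatom]
    simpa only [thickening_singleton] using
      tendsto_measure_thickening_of_isClosed (s := {x₀}) ⟨b, hb, by rwa [thickening_singleton]⟩
        isClosed_singleton
  have hzero : μ (ball x₀ b) ≤ 0 := ge_of_tendsto hlim <|
    mem_of_superset (Ioo_mem_nhdsGT hb) fun a ha =>
      AnnularDecayAt.measure_ball_le hAD hC.le hη1 ha.1 ha.2.le (half_lt_self hR₀) hfin
  exact (hball b hb).1.ne' (le_zero_iff.mp hzero)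

theorem stmt_3 {X : Type*} [MetricSpace X] [MeasurableSpace X] [BorelSpace X] (μ : Measure X) (x₀ : X)
    (hatom : μ {x₀} = 0)
    (hball : ∀ ρ : ℝ, 0 < ρ → 0 < μ (ball x₀ ρ) ∧ μ (ball x₀ ρ) < ⊤)
    (η C R₀ : ℝ) (hη : 0 < η) (hC : 0 < C) (hR₀ : 0 < R₀)
    (hAD : ∀ r R : ℝ, 0 < r → r < R → R < R₀ →
      μ (ball x₀ R \ ball x₀ r) ≤ ENNReal.ofReal (C * (1 - r / R) ^ η) * μ (ball x₀ R)) :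
    η ≤ 1 :=
  stmt_3_general μ x₀ hatom hball η C R₀ hC hR₀ hAD
end

section
/- Let $w : [0,\infty) \to (0,\infty)$ be nonincreasing and locally integrable, and define $\mu(E) = \int_E w\,dx$ for Borel sets $E \subset [0,\infty)$. Then for all $0 < r < R$, $\mu([0,R)) - \mu([0,r)) \le 2\,(1 - r/R)\,\mu([0,R))$; that is, $\mu$ has the 1-annular decay property at $0$ with constant $2$. -/
open MeasureTheory Set

/-!
Comparing a nonincreasing density with its value at `r` gives
`∫_{[r,R)} w ≤ (R - r) w(r)` and `r w(r) ≤ ∫_{[0,r)} w`, hence `r μ([r,R)) ≤ (R - r) μ([0,r))`.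
Adding `(R - r) μ([r,R))` to both sides yields `R μ([r,R)) ≤ (R - r) μ([0,R))`, i.e. annular decay
with constant `1`, which is stronger than the constant `2` claimed since `μ([0,R)) ≥ 0`.
-/

theorem setIntegral_Ico_add_setIntegral_Ico {w : ℝ → ℝ} {a b c : ℝ} (hab : a ≤ b) (hbc : b ≤ c)
    (hint : IntegrableOn w (Ico a c)) :
    (∫ x in Ico a b, w x) + ∫ x in Ico b c, w x = ∫ x in Ico a c, w x := by
  rw [← setIntegral_union Ico_disjoint_Ico_same measurableSet_Ico
    (hint.mono_set (Ico_subset_Ico_right hbc)) (hint.mono_set (Ico_subset_Ico_left hab)),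
    Ico_union_Ico_eq_Ico hab hbc]

namespace AntitoneOn

variable {w : ℝ → ℝ} {a b r R : ℝ}

theorem setIntegral_Ico_le (hab : a ≤ b) (hw : AntitoneOn w (Ico a b))
    (hint : IntegrableOn w (Ico a b)) : ∫ x in Ico a b, w x ≤ (b - a) * w a := by
  rcases hab.eq_or_lt with rfl | hab
  · simp
  calc ∫ x in Ico a b, w x ≤ ∫ _ in Ico a b, w a :=
        setIntegral_mono_on hint (integrableOn_const measure_Ico_lt_top.ne) measurableSet_Ico
          fun x hx => hw (left_mem_Ico.2 hab) hx hx.1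
    _ = (b - a) * w a := by simp [hab.le]

theorem le_setIntegral_Ico (hab : a ≤ b) (hw : AntitoneOn w (Icc a b))
    (hint : IntegrableOn w (Ico a b)) : (b - a) * w b ≤ ∫ x in Ico a b, w x := by
  simpa [hab, mul_comm] using setIntegral_ge_of_const_le_real measurableSet_Ico
    measure_Ico_lt_top.ne
    (fun x hx => hw (Ico_subset_Icc_self hx) (right_mem_Icc.2 hab) hx.2.le) hint

theorem mul_setIntegral_Ico_le_mul_setIntegral_Ico (har : a ≤ r) (hrR : r ≤ R)
    (hw : AntitoneOn w (Icc a R)) (hint : IntegrableOn w (Ico a R)) :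
    (r - a) * ∫ x in Ico r R, w x ≤ (R - r) * ∫ x in Ico a r, w x :=
  calc (r - a) * ∫ x in Ico r R, w x ≤ (r - a) * ((R - r) * w r) := by
        gcongr
        exact (hw.mono (Ico_subset_Icc_self.trans (Icc_subset_Icc_left har))).setIntegral_Ico_le
          hrR (hint.mono_set (Ico_subset_Ico_left har))
    _ = (R - r) * ((r - a) * w r) := by ring
    _ ≤ (R - r) * ∫ x in Ico a r, w x := by
        gcongr
        exact (hw.mono (Icc_subset_Icc_right hrR)).le_setIntegral_Ico
          har (hint.mono_set (Ico_subset_Ico_right hrR))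

theorem setIntegral_annular_decay (har : a ≤ r) (hrR : r ≤ R)
    (hw : AntitoneOn w (Icc a R)) (hint : IntegrableOn w (Ico a R)) :
    (R - a) * ∫ x in Ico r R, w x ≤ (R - r) * ∫ x in Ico a R, w x := by
  rw [← setIntegral_Ico_add_setIntegral_Ico har hrR hint]
  linear_combination hw.mul_setIntegral_Ico_le_mul_setIntegral_Ico har hrR hint

end AntitoneOn

theorem stmt_6 (w : ℝ → ℝ)
    (hpos : ∀ x ∈ Set.Ici (0:ℝ), 0 < w x)
    (hmono : AntitoneOn w (Set.Ici (0:ℝ)))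
    (hint : ∀ R : ℝ, 0 < R → IntegrableOn w (Set.Ico 0 R)) :
    ∀ r R : ℝ, 0 < r → r < R →
      (∫ x in Set.Ico (0:ℝ) R, w x) - (∫ x in Set.Ico (0:ℝ) r, w x) ≤
        2 * (1 - r / R) * ∫ x in Set.Ico (0:ℝ) R, w x := by
  intro r R hr hrR
  have hR : 0 < R := hr.trans hrR
  have hintR := hint R hR
  have hdecay := (hmono.mono Icc_subset_Ici_self).setIntegral_annular_decay hr.le hrR.le hintR
  have hnonneg : 0 ≤ ∫ x in Ico 0 R, w x :=
    setIntegral_nonneg measurableSet_Ico fun x hx => (hpos x hx.1).le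
  have hratio : 0 ≤ 1 - r / R := by rw [sub_nonneg, div_le_one hR]; exact hrR.le
  have hdecay_div : ∫ x in Ico r R, w x ≤ (1 - r / R) * ∫ x in Ico 0 R, w x := by
    rw [one_sub_div hR.ne', div_mul_eq_mul_div, le_div_iff₀ hR]
    linarith
  have hsplit := setIntegral_Ico_add_setIntegral_Ico hr.le hrR.le hintR
  linarith [mul_nonneg hratio hnonneg]
end

section
/- Let $\mu = m + \delta_1$ on $\mathbb{R}$, where $m$ is Lebesgue measure and $\delta_1$ the Dirac measure at $1$. Then $\mu$ is doubling at $0$ (there is $C$ with $\mu((-2r,2r)) \le C\mu((-r,r))$ for all $r > 0$), but for every $\eta > 0$ and $C > 0$ there exist $0 < r < R$ with $\mu((-R,R) \setminus (-r,r)) > C(1 - r/R)^\eta\,\mu((-R,R))$; that is, $\mu$ does not have the $\eta$-annular decay property at $0$ for any $\eta > 0$. -/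
/-!
Doubling at `0` holds with constant `3`: doubling the radius doubles the Lebesgue part, and the
atom can only enter `(-2r, 2r)` once `2r > 1`, when it is outweighed by the Lebesgue measure
`2r` of `(-r, r)`. Annular decay fails because of the atom alone: for `ρ = d(a, x)` the annulus
`B(x, R) \ B(x, ρ)` always contains the atom `a`, while `(1 - ρ/R)^η μ(B(x, R)) → 0` as `R ↘ ρ`.
-/

open MeasureTheory Metric Filter Topology

instance MeasureTheory.Measure.isFiniteMeasureOnCompacts_add {X : Type*} [TopologicalSpace X]
    [MeasurableSpace X] (μ ν : Measure X) [IsFiniteMeasureOnCompacts μ]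
    [IsFiniteMeasureOnCompacts ν] : IsFiniteMeasureOnCompacts (μ + ν) where
  lt_top_of_isCompact _ hK := by
    rw [Measure.add_apply]
    exact ENNReal.add_lt_top.2 ⟨hK.measure_lt_top, hK.measure_lt_top⟩

theorem exists_measure_annulus_gt_of_atom {X : Type*} [MetricSpace X] [ProperSpace X]
    [MeasurableSpace X] {μ : Measure X} [IsFiniteMeasureOnCompacts μ] {x a : X} (hax : a ≠ x)
    (ha : μ {a} ≠ 0) {η : ℝ} (hη : 0 < η) (C : ℝ) :
    ∃ r R : ℝ, 0 < r ∧ r < R ∧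
      ENNReal.ofReal (C * (1 - r / R) ^ η) * μ (ball x R) < μ (ball x R \ ball x r) := by
  set ρ := dist a x
  have hρ : 0 < ρ := dist_pos.2 hax
  set M := μ (closedBall x (ρ + 1))
  have hM : M ≠ ⊤ := measure_closedBall_lt_top.ne
  have hdecay : Tendsto (fun R ↦ ENNReal.ofReal (C * (1 - ρ / R) ^ η) * M) (𝓝[>] ρ) (𝓝 0) := by
    have hbase : Tendsto (fun R ↦ 1 - ρ / R) (𝓝[>] ρ) (𝓝 0) := by
      have : ContinuousAt (fun R ↦ 1 - ρ / R) ρ := by fun_prop (disch := positivity)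
      simpa [div_self hρ.ne'] using this.tendsto.mono_left nhdsWithin_le_nhds
    have := ENNReal.Tendsto.mul_const
      (ENNReal.tendsto_ofReal ((hbase.rpow_const (.inr hη.le)).const_mul C)) (.inr hM)
    simpa [Real.zero_rpow hη.ne'] using this
  obtain ⟨R, hsmall, hρR, hR1⟩ := ((hdecay.eventually (gt_mem_nhds (pos_iff_ne_zero.2 ha))).and
    (Ioo_mem_nhdsGT (lt_add_one ρ))).exists
  refine ⟨ρ, R, hρ, hρR, ?_⟩
  calc ENNReal.ofReal (C * (1 - ρ / R) ^ η) * μ (ball x R)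
      ≤ ENNReal.ofReal (C * (1 - ρ / R) ^ η) * M := by
        gcongr
        exact measure_mono (ball_subset_closedBall.trans (closedBall_subset_closedBall hR1.le))
    _ < μ {a} := hsmall
    _ ≤ μ (ball x R \ ball x ρ) := by
        refine measure_mono (Set.singleton_subset_iff.2 ⟨hρR, ?_⟩)
        simp [ρ]

theorem dirac_one_ball_two_mul_le_volume_ball (r : ℝ) :
    Measure.dirac (1 : ℝ) (ball 0 (2 * r)) ≤ volume (ball (0 : ℝ) r) := by
  by_cases h : (1 : ℝ) ∈ ball 0 (2 * r)
  · have h1 : 1 < 2 * r := by simpa using h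
    rw [Measure.dirac_apply_of_mem h, Real.volume_ball, ← ENNReal.ofReal_one]
    exact ENNReal.ofReal_le_ofReal h1.le
  · simp [Measure.dirac_apply, h]

theorem volume_add_dirac_one_ball_two_mul_le (r : ℝ) :
    (volume + Measure.dirac 1 : Measure ℝ) (ball 0 (2 * r)) ≤
      3 * (volume + Measure.dirac 1 : Measure ℝ) (ball 0 r) :=
  calc (volume + Measure.dirac 1 : Measure ℝ) (ball 0 (2 * r))
      = 2 * volume (ball (0 : ℝ) r) + Measure.dirac (1 : ℝ) (ball 0 (2 * r)) := by
        rw [Measure.add_apply, Real.volume_ball, Real.volume_ball, ← ENNReal.ofReal_ofNat 2,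
          ← ENNReal.ofReal_mul zero_le_two]
    _ ≤ 2 * volume (ball (0 : ℝ) r) + volume (ball (0 : ℝ) r) := by
        grw [dirac_one_ball_two_mul_le_volume_ball r]
    _ = 3 * volume (ball (0 : ℝ) r) := by ring
    _ ≤ 3 * (volume + Measure.dirac 1 : Measure ℝ) (ball 0 r) := by
        gcongr; exact Measure.le_add_right le_rfl

theorem stmt_16 (μ : Measure ℝ) (hμ : μ = volume + Measure.dirac 1) :
    (∃ C : ℝ, 0 < C ∧ ∀ r : ℝ, 0 < r →
      μ (ball (0:ℝ) (2 * r)) ≤ ENNReal.ofReal C * μ (ball (0:ℝ) r)) ∧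
    (∀ η C : ℝ, 0 < η → 0 < C → ∃ r R : ℝ, 0 < r ∧ r < R ∧
      ENNReal.ofReal (C * (1 - r / R) ^ η) * μ (ball (0:ℝ) R) <
        μ (ball (0:ℝ) R \ ball (0:ℝ) r)) := by
  subst hμ
  refine ⟨⟨3, three_pos, fun r _ ↦ ?_⟩, fun η C hη _ ↦ ?_⟩
  · simpa using volume_add_dirac_one_ball_two_mul_le r
  · have hatom : (volume + Measure.dirac 1 : Measure ℝ) {1} ≠ 0 := by simp
    exact exists_measure_annulus_gt_of_atom one_ne_zero hatom hη C
end
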